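/- arXiv:1404.1656 — 5 statements merged into one kernel-verified Lean document; each statement's English description precedes it below -/
import Mathlib

section
/- Suppose F preserves a probability measure μ, A_k are measurable sets with E_n = ∑_{j=0}^{n-1} μ(A_j) → ∞, and the SP property holds: there is C > 0 such that for all m < n, ∑_{i=m}^{n} ∑_{j=i+1}^{n} (μ(A_i ∩ F^{-(j-i)} A_j) − μ(A_i)μ(A_j)) ≤ C ∑_{i=m}^{n} μ(A_i). Then the strong Borel–Cantelli property holds: S_n(x)/E_n → 1 for μ-a.e. x, where S_n(x) = ∑_{j=0}^{n-1} 1_{A_j}(F^j x). -/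
/-!
Writing `B_j = F^{-j} A_j`, invariance of `μ` turns the SP property into the bound
`∑_{i<j<N} (μ(B_i ∩ B_j) - μ(B_i) μ(B_j)) ≤ C ∑_{j<N} μ(B_j)`, hence
`Var S_N ≤ (1 + 2C) E_N` for `S_N = ∑_{j<N} 1_{B_j}`. Along a subsequence `ν_k` with
`E(ν_k) ≈ k²`, the variance bound gives `∫ (S/E - 1)² ≲ 1/k²`, which is summable, so
`S(ν_k)/E(ν_k) → 1` almost everywhere; since `E(ν_{k+1}) / E(ν_k) → 1` and `S`, `E` are monotone,
the ratio `S_n / E_n` is squeezed between neighbouring terms of the subsequence.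
-/

open Filter MeasureTheory ProbabilityTheory Finset Topology

lemma sum_range_sum_range_eq_sum_diag_add_sum_Ioo {M : Type*} [AddCommMonoid M] (g : ℕ → ℕ → M)
    (N : ℕ) :
    ∑ i ∈ range N, ∑ j ∈ range N, g i j
      = ∑ i ∈ range N, g i i + ∑ i ∈ range N, ∑ j ∈ Ioo i N, (g i j + g j i) := by
  induction N with
  | zero => simp
  | succ N ih =>
    have hIoo : ∀ i ∈ range N, Ioo i (N + 1) = insert N (Ioo i N) := by
      intro i hi
      ext j
      simp only [mem_range] at hi
      simp only [mem_Ioo, mem_insert]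
      omega
    have hN : Ioo N (N + 1) = ∅ := by
      ext j
      simp only [mem_Ioo, notMem_empty, iff_false]
      omega
    rw [sum_range_succ (fun i => ∑ j ∈ Ioo i (N + 1), _), hN, sum_empty, add_zero,
      sum_congr rfl fun i hi => (sum_congr (hIoo i hi) fun _ _ => rfl)]
    simp only [sum_range_succ, sum_add_distrib, ih, sum_insert (s := Ioo _ N) (a := N) (by simp)]
    abel

lemma sum_range_sum_Ioo_le_of_sum_Icc_sum_Ioc_le {g : ℕ → ℕ → ℝ} {p : ℕ → ℝ} {C : ℝ}
    (hp : ∀ i, 0 ≤ p i) (hC : 0 ≤ C)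
    (h : ∀ m n, m < n → ∑ i ∈ Icc m n, ∑ j ∈ Ioc i n, g i j ≤ C * ∑ i ∈ Icc m n, p i) (N : ℕ) :
    ∑ i ∈ range N, ∑ j ∈ Ioo i N, g i j ≤ C * ∑ i ∈ range N, p i := by
  rcases lt_or_ge N 2 with hN | hN
  · have hempty : ∀ i ∈ range N, Ioo i N = ∅ := fun i hi => by
      ext j
      simp only [mem_range] at hi
      simp only [mem_Ioo, notMem_empty, iff_false]
      omega
    rw [sum_congr rfl fun i hi => by rw [hempty i hi, sum_empty], sum_const_zero]
    exact mul_nonneg hC (sum_nonneg fun i _ => hp i)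
  · have hrange : range N = Icc 0 (N - 1) := by ext; simp only [mem_range, mem_Icc]; omega
    have hIoo (i : ℕ) : Ioo i N = Ioc i (N - 1) := by ext; simp only [mem_Ioo, mem_Ioc]; omega
    simp only [hrange, hIoo]
    exact h 0 (N - 1) (by omega)

lemma exists_strictMono_sq_le_lt_sq_add_one {E : ℕ → ℝ} (hE0 : E 0 = 0) (hEmono : Monotone E)
    (hEstep : ∀ n, E (n + 1) ≤ E n + 1) (hEtop : Tendsto E atTop atTop) :
    ∃ ν : ℕ → ℕ, StrictMono ν ∧ ν 0 = 0 ∧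
      ∀ k : ℕ, (k : ℝ) ^ 2 ≤ E (ν k) ∧ E (ν k) < k ^ 2 + 1 := by
  have hex (k : ℕ) : ∃ n, (k : ℝ) ^ 2 ≤ E n := (hEtop.eventually_ge_atTop _).exists
  classical
  let ν k := Nat.find (hex k)
  have hupper (k : ℕ) : E (ν k) < k ^ 2 + 1 := by
    by_cases h : ν k = 0
    · rw [h, hE0]
      positivity
    · obtain ⟨m, hm⟩ := Nat.exists_eq_succ_of_ne_zero h
      have hlt : E m < k ^ 2 := not_le.mp (Nat.find_min (hex k) (show m < ν k by omega))
      rw [hm]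
      linarith [hEstep m]
  refine ⟨ν, strictMono_nat_of_lt_succ fun k => ?_, ?_,
    fun k => ⟨Nat.find_spec (hex k), hupper k⟩⟩
  · refine (Nat.lt_find_iff (hex (k + 1)) _).mpr fun m hm => not_le.mpr ?_
    calc E m ≤ E (ν k) := hEmono hm
      _ < k ^ 2 + 1 := hupper k
      _ ≤ ((k + 1 : ℕ) : ℝ) ^ 2 := by push_cast; nlinarith [(k.cast_nonneg : (0 : ℝ) ≤ k)]
  · exact (Nat.find_eq_zero (hex 0)).mpr (by simp [hE0])

lemma tendsto_succ_div_of_sq_le_of_le_sq_add_one {c : ℕ → ℝ} (hlow : ∀ k : ℕ, (k : ℝ) ^ 2 ≤ c k)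
    (hup : ∀ k : ℕ, c k ≤ k ^ 2 + 1) : Tendsto (fun k => c (k + 1) / c k) atTop (𝓝 1) := by
  have hbound : Tendsto (fun k : ℕ => (1 + 1 / (k : ℝ)) ^ 2 + (1 / (k : ℝ)) ^ 2) atTop (𝓝 1) := by
    have h := tendsto_one_div_atTop_nhds_zero_nat (𝕜 := ℝ)
    simpa using ((tendsto_const_nhds (x := (1 : ℝ))).add h).pow 2 |>.add (h.pow 2)
  refine tendsto_of_tendsto_of_tendsto_of_le_of_le' tendsto_const_nhds hbound ?_ ?_
  all_goals filter_upwards [eventually_ge_atTop 1] with k hk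
  all_goals have hk' : (1 : ℝ) ≤ k := by exact_mod_cast hk
  all_goals have hck : 0 < c k := lt_of_lt_of_le (by positivity) (hlow k)
  · rw [le_div_iff₀ hck, one_mul]
    have := hlow (k + 1)
    push_cast at this
    nlinarith [hup k]
  · rw [div_le_iff₀ hck]
    calc c (k + 1) ≤ ((k + 1 : ℕ) : ℝ) ^ 2 + 1 := hup (k + 1)
      _ = ((1 + 1 / (k : ℝ)) ^ 2 + (1 / (k : ℝ)) ^ 2) * k ^ 2 := by
        push_cast
        field_simp
      _ ≤ ((1 + 1 / (k : ℝ)) ^ 2 + (1 / (k : ℝ)) ^ 2) * c k := by gcongr; exact hlow k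

lemma tendsto_div_of_tendsto_div_comp_strictMono {a b : ℕ → ℝ} (ha0 : ∀ n, 0 ≤ a n)
    (ha : Monotone a) (hb : Monotone b) {ν : ℕ → ℕ} (hν : StrictMono ν) (hν0 : ν 0 = 0)
    (hbpos : ∀ᶠ k in atTop, 0 < b (ν k))
    (hratio : Tendsto (fun k => b (ν (k + 1)) / b (ν k)) atTop (𝓝 1))
    (hsub : Tendsto (fun k => a (ν k) / b (ν k)) atTop (𝓝 1)) :
    Tendsto (fun n => a n / b n) atTop (𝓝 1) := by
  have hex (n : ℕ) : ∃ k, n < ν (k + 1) := ⟨n, (Nat.lt_succ_self n).trans_le (hν.id_le _)⟩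
  classical
  let κ n := Nat.find (hex n)
  have hκ_lt (n : ℕ) : n < ν (κ n + 1) := Nat.find_spec (hex n)
  have hκ_le (n : ℕ) : ν (κ n) ≤ n := by
    by_cases h : κ n = 0
    · rw [h, hν0]
      exact n.zero_le
    · obtain ⟨m, hm⟩ := Nat.exists_eq_succ_of_ne_zero h
      rw [hm]
      exact not_lt.mp (Nat.find_min (hex n) (show m < κ n by omega))
  have hκ : Tendsto κ atTop atTop := tendsto_atTop_atTop.mpr fun K =>
    ⟨ν K, fun n hn => Nat.lt_succ_iff.mp (hν.lt_iff_lt.mp (hn.trans_lt (hκ_lt n)))⟩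
  have hlow : Tendsto (fun k => a (ν k) / b (ν k) * (b (ν k) / b (ν (k + 1)))) atTop (𝓝 1) := by
    simpa using hsub.mul (hratio.inv₀ one_ne_zero)
  have hup : Tendsto (fun k => a (ν (k + 1)) / b (ν (k + 1)) * (b (ν (k + 1)) / b (ν k)))
      atTop (𝓝 1) := by
    simpa using ((tendsto_add_atTop_iff_nat 1).mpr hsub).mul hratio
  have hbpos' := hκ.eventually hbpos
  refine tendsto_of_tendsto_of_tendsto_of_le_of_le' (hlow.comp hκ) (hup.comp hκ) ?_ ?_
  all_goals filter_upwards [hbpos'] with n hn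
  all_goals have hbn : b (ν (κ n)) ≤ b n := hb (hκ_le n)
  all_goals have hbn' : b n ≤ b (ν (κ n + 1)) := hb (hκ_lt n).le
  · rw [Function.comp_apply, div_mul_div_cancel₀ hn.ne']
    exact div_le_div₀ (ha0 _) (ha (hκ_le n)) (hn.trans_le hbn) hbn'
  · rw [Function.comp_apply, div_mul_div_cancel₀ (hn.trans_le (hbn.trans hbn')).ne']
    exact div_le_div₀ (ha0 _) (ha (hκ_lt n).le) hn hbn

section

variable {Ω : Type*} [MeasurableSpace Ω] {μ : Measure Ω}

lemma ae_tendsto_zero_of_summable_integral_norm {F : Type*} [NormedAddCommGroup F]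
    {f : ℕ → Ω → F} (hf : ∀ k, Integrable (f k) μ)
    (hsum : Summable fun k => ∫ x, ‖f k x‖ ∂μ) :
    ∀ᵐ x ∂μ, Tendsto (fun k => f k x) atTop (𝓝 0) := by
  have hfin : ∑' k, eLpNorm (f k) 1 μ ≠ ⊤ := by
    simp_rw [eLpNorm_one_eq_lintegral_enorm, ← ofReal_integral_norm_eq_lintegral_enorm (hf _),
      ← ENNReal.ofReal_tsum_of_nonneg (fun k => integral_nonneg fun x => norm_nonneg _) hsum]
    exact ENNReal.ofReal_ne_top
  filter_upwards [summable_norm_of_tsum_eLpNorm_ne_top le_rfl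
    (fun k => (hf k).aestronglyMeasurable) hfin] with x hx
  exact tendsto_zero_iff_norm_tendsto_zero.mpr hx.tendsto_atTop_zero

lemma ae_tendsto_div_of_summable_inv {S : ℕ → Ω → ℝ} {c : ℕ → ℝ} {K : ℝ} (hc : ∀ k, 0 < c k)
    (hSint : ∀ k, Integrable (fun x => (S k x - c k) ^ 2) μ)
    (hvar : ∀ k, ∫ x, (S k x - c k) ^ 2 ∂μ ≤ K * c k) (hsum : Summable fun k => 1 / c k) :
    ∀ᵐ x ∂μ, Tendsto (fun k => S k x / c k) atTop (𝓝 1) := by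
  have hsq (k : ℕ) (x : Ω) : (S k x / c k - 1) ^ 2 = (S k x - c k) ^ 2 / c k ^ 2 := by
    have := (hc k).ne'
    field_simp
  have hint (k : ℕ) : Integrable (fun x => (S k x / c k - 1) ^ 2) μ := by
    simpa only [hsq] using (hSint k).div_const (c k ^ 2)
  have hbound (k : ℕ) : ∫ x, ‖(S k x / c k - 1) ^ 2‖ ∂μ ≤ |K| * (1 / c k) := by
    have := hc k
    calc ∫ x, ‖(S k x / c k - 1) ^ 2‖ ∂μ = (∫ x, (S k x - c k) ^ 2 ∂μ) / c k ^ 2 := by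
          rw [← integral_div]
          exact integral_congr_ae (.of_forall fun x =>
            (Real.norm_of_nonneg (sq_nonneg _)).trans (hsq k x))
      _ ≤ |K| * c k / c k ^ 2 := by
          gcongr
          exact (hvar k).trans (by gcongr; exact le_abs_self K)
      _ = |K| * (1 / c k) := by field_simp
  have hsummable : Summable fun k => ∫ x, ‖(S k x / c k - 1) ^ 2‖ ∂μ :=
    Summable.of_nonneg_of_le (fun k => integral_nonneg fun x => norm_nonneg _) hbound
      (hsum.mul_left |K|)
  filter_upwards [ae_tendsto_zero_of_summable_integral_norm hint hsummable] with x hx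
  have habs : Tendsto (fun k => |S k x / c k - 1|) atTop (𝓝 0) := by
    simpa [Real.sqrt_sq_eq_abs] using hx.sqrt
  simpa using ((tendsto_zero_iff_abs_tendsto_zero _).mpr habs).add_const 1

theorem ae_tendsto_div_of_integral_sq_sub_le {S : ℕ → Ω → ℝ} {E : ℕ → ℝ} {K : ℝ}
    (hS0 : ∀ n x, 0 ≤ S n x) (hSmono : ∀ x, Monotone fun n => S n x)
    (hSint : ∀ n, Integrable (fun x => (S n x - E n) ^ 2) μ)
    (hvar : ∀ n, ∫ x, (S n x - E n) ^ 2 ∂μ ≤ K * E n)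
    (hE0 : E 0 = 0) (hEmono : Monotone E) (hEstep : ∀ n, E (n + 1) ≤ E n + 1)
    (hEtop : Tendsto E atTop atTop) :
    ∀ᵐ x ∂μ, Tendsto (fun n => S n x / E n) atTop (𝓝 1) := by
  obtain ⟨ν, hν, hν0, hνE⟩ := exists_strictMono_sq_le_lt_sq_add_one hE0 hEmono hEstep hEtop
  have hEν_pos (k : ℕ) (hk : 1 ≤ k) : 0 < E (ν k) := lt_of_lt_of_le (by positivity) (hνE k).1
  have hsum : Summable fun k => 1 / E (ν (k + 1)) :=
    Summable.of_nonneg_of_le (fun k => (one_div_pos.mpr (hEν_pos _ k.succ_pos)).le)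
      (fun k => one_div_le_one_div_of_le (by positivity) (hνE (k + 1)).1)
      ((summable_nat_add_iff 1).mpr (Real.summable_one_div_nat_pow.mpr one_lt_two))
  have hratio : Tendsto (fun k => E (ν (k + 1)) / E (ν k)) atTop (𝓝 1) :=
    tendsto_succ_div_of_sq_le_of_le_sq_add_one (fun k => (hνE k).1) (fun k => (hνE k).2.le)
  filter_upwards [ae_tendsto_div_of_summable_inv (fun k => hEν_pos _ k.succ_pos)
    (fun k => hSint _) (fun k => hvar _) hsum] with x hx
  exact tendsto_div_of_tendsto_div_comp_strictMono (hS0 · x) (hSmono x) hEmono hν hν0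
    ((eventually_ge_atTop 1).mono hEν_pos) hratio ((tendsto_add_atTop_iff_nat 1).mp hx)

lemma memLp_indicator_one [IsFiniteMeasure μ] {s : Set Ω} (hs : MeasurableSet s) (p : ENNReal) :
    MemLp (s.indicator (1 : Ω → ℝ)) p μ :=
  memLp_indicator_const p hs 1 (.inr (measure_ne_top μ s))

lemma covariance_indicator_one [IsProbabilityMeasure μ] {s t : Set Ω} (hs : MeasurableSet s)
    (ht : MeasurableSet t) :
    cov[s.indicator 1, t.indicator 1; μ] = μ.real (s ∩ t) - μ.real s * μ.real t := by
  rw [covariance_eq_sub (memLp_indicator_one hs 2) (memLp_indicator_one ht 2),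
    ← Set.inter_indicator_one, integral_indicator_one (hs.inter ht), integral_indicator_one hs,
    integral_indicator_one ht]

lemma integral_sq_sum_indicator_sub_le [IsProbabilityMeasure μ] {B : ℕ → Set Ω}
    (hB : ∀ j, MeasurableSet (B j)) {C : ℝ} {N : ℕ} (hcross : ∑ i ∈ range N, ∑ j ∈ Ioo i N,
      (μ.real (B i ∩ B j) - μ.real (B i) * μ.real (B j)) ≤ C * ∑ i ∈ range N, μ.real (B i)) :
    ∫ x, (∑ j ∈ range N, (B j).indicator 1 x - ∑ j ∈ range N, μ.real (B j)) ^ 2 ∂μ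
      ≤ (1 + 2 * C) * ∑ j ∈ range N, μ.real (B j) := by
  have hL2 (j : ℕ) : MemLp ((B j).indicator (1 : Ω → ℝ)) 2 μ := memLp_indicator_one (hB j) 2
  have hmean : ∫ x, ∑ j ∈ range N, (B j).indicator 1 x ∂μ = ∑ j ∈ range N, μ.real (B j) := by
    rw [integral_finsetSum _ fun j _ => (hL2 j).integrable one_le_two]
    exact sum_congr rfl fun j _ => integral_indicator_one (hB j)
  have hvar := variance_eq_integral (memLp_finsetSum (range N) fun j _ => hL2 j).aemeasurable
  rw [hmean, variance_fun_sum' fun j _ => hL2 j,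
    sum_range_sum_range_eq_sum_diag_add_sum_Ioo] at hvar
  rw [← hvar]
  simp only [covariance_comm ((B _).indicator 1) ((B _).indicator 1), ← two_mul, ← mul_sum,
    covariance_indicator_one (hB _) (hB _), Set.inter_self]
  calc _ ≤ ∑ i ∈ range N, μ.real (B i) + 2 * (C * ∑ i ∈ range N, μ.real (B i)) := by
        gcongr with i
        exact sub_le_self _ (mul_self_nonneg _)
    _ = _ := by ring

end

theorem ae_tendsto_sum_indicator_div {Ω : Type*} [MeasurableSpace Ω] {μ : Measure Ω}
    [IsProbabilityMeasure μ] {B : ℕ → Set Ω} (hB : ∀ j, MeasurableSet (B j)) {C : ℝ}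
    (hcross : ∀ N, ∑ i ∈ range N, ∑ j ∈ Ioo i N,
      (μ.real (B i ∩ B j) - μ.real (B i) * μ.real (B j)) ≤ C * ∑ i ∈ range N, μ.real (B i))
    (hdiv : Tendsto (fun n => ∑ j ∈ range n, μ.real (B j)) atTop atTop) :
    ∀ᵐ x ∂μ, Tendsto (fun n => (∑ j ∈ range n, (B j).indicator 1 x) /
      ∑ j ∈ range n, μ.real (B j)) atTop (𝓝 1) := by
  have hL2 (j : ℕ) : MemLp ((B j).indicator (1 : Ω → ℝ)) 2 μ := memLp_indicator_one (hB j) 2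
  have hind_nonneg (j : ℕ) (x : Ω) : 0 ≤ (B j).indicator (1 : Ω → ℝ) x :=
    Set.indicator_nonneg (fun _ _ => zero_le_one) x
  refine ae_tendsto_div_of_integral_sq_sub_le (fun n x => sum_nonneg fun j _ => hind_nonneg j x)
    (fun x m n hmn => sum_le_sum_of_subset_of_nonneg (range_mono hmn) fun j _ _ => hind_nonneg j x)
    (fun n => ((memLp_finsetSum _ fun j _ => hL2 j).sub (memLp_const _)).integrable_sq)
    (fun n => integral_sq_sum_indicator_sub_le hB (hcross n)) (by simp)
    (fun m n hmn => sum_le_sum_of_subset_of_nonneg (range_mono hmn)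
      fun j _ _ => measureReal_nonneg)
    (fun n => ?_) hdiv
  simp only [sum_range_succ]
  linarith [measureReal_le_one (μ := μ) (s := B n)]

theorem MeasureTheory.MeasurePreserving.measureReal_preimage_iterate_inter {Ω : Type*}
    [MeasurableSpace Ω] {μ : Measure Ω} {F : Ω → Ω} (hF : MeasurePreserving F μ μ) {s t : Set Ω}
    (hs : MeasurableSet s) (ht : MeasurableSet t) {i j : ℕ} (hij : i ≤ j) :
    μ.real (F^[i] ⁻¹' s ∩ F^[j] ⁻¹' t) = μ.real (s ∩ F^[j - i] ⁻¹' t) := by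
  obtain ⟨n, rfl⟩ := Nat.exists_eq_add_of_le hij
  rw [Nat.add_sub_cancel_left, add_comm, Function.iterate_add, Set.preimage_comp,
    ← Set.preimage_inter, (hF.iterate i).measureReal_preimage
      (hs.inter ((hF.iterate n).measurable ht)).nullMeasurableSet]

/-- If `F` preserves the probability measure `μ`, `E_n = ∑_{j<n} μ(A_j) → ∞`, and the
SP property holds, then the strong Borel–Cantelli property holds:
`S_n(x)/E_n → 1` for μ-a.e. `x`, where `S_n(x) = ∑_{j<n} 1_{A_j}(F^j x)`. -/
theorem stmt3 {Ω : Type*} [MeasurableSpace Ω] (μ : Measure Ω) [IsProbabilityMeasure μ]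
    (F : Ω → Ω) (hF : MeasurePreserving F μ μ)
    (A : ℕ → Set Ω) (hA : ∀ k, MeasurableSet (A k))
    (E : ℕ → ℝ) (hE : ∀ n, E n = ∑ j ∈ Finset.range n, (μ (A j)).toReal)
    (hdiv : Tendsto E atTop atTop)
    (C : ℝ) (hC : 0 < C)
    (hSP : ∀ m n : ℕ, m < n →
      ∑ i ∈ Finset.Icc m n, ∑ j ∈ Finset.Ioc i n,
        ((μ (A i ∩ F^[j - i] ⁻¹' A j)).toReal - (μ (A i)).toReal * (μ (A j)).toReal) ≤
        C * ∑ i ∈ Finset.Icc m n, (μ (A i)).toReal) :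
    ∀ᵐ x ∂μ, Tendsto
      (fun n : ℕ =>
        (∑ j ∈ Finset.range n, Set.indicator (A j) (fun _ => (1 : ℝ)) (F^[j] x)) / E n)
      atTop (nhds 1) := by
  simp only [← measureReal_def] at hE hSP
  let B (j : ℕ) : Set Ω := F^[j] ⁻¹' A j
  have hμB (j : ℕ) : μ.real (B j) = μ.real (A j) :=
    (hF.iterate j).measureReal_preimage (hA j).nullMeasurableSet
  have hEB : E = fun n => ∑ j ∈ range n, μ.real (B j) := funext fun n => by simp only [hE, hμB]
  have hcross (N : ℕ) : ∑ i ∈ range N, ∑ j ∈ Ioo i N,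
      (μ.real (B i ∩ B j) - μ.real (B i) * μ.real (B j)) ≤ C * ∑ i ∈ range N, μ.real (B i) := by
    calc _ = ∑ i ∈ range N, ∑ j ∈ Ioo i N,
          (μ.real (A i ∩ F^[j - i] ⁻¹' A j) - μ.real (A i) * μ.real (A j)) := by
          refine sum_congr rfl fun i _ => sum_congr rfl fun j hj => ?_
          rw [hμB, hμB, hF.measureReal_preimage_iterate_inter (hA i) (hA j)
            (mem_Ioo.mp hj).1.le]
      _ ≤ C * ∑ i ∈ range N, μ.real (A i) :=
          sum_range_sum_Ioo_le_of_sum_Icc_sum_Ioc_le (fun i => measureReal_nonneg) hC.le hSP N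
      _ = C * ∑ i ∈ range N, μ.real (B i) := by simp only [hμB]
  subst hEB
  exact ae_tendsto_sum_indicator_div (fun j => (hF.iterate j).measurable (hA j)) hcross hdiv
end

section
/- Suppose μ satisfies Assumption A at x₀ with exponent δ̃ ∈ (0,1] (i.e. every shell of width ε around x₀ with 0 < ε ≪ r < 1 has measure at most ε^{δ̃}), and u_n ≥ (v + log n)/(d + ε₀) for large n with d + ε₀ > 0. Then there exists δ′ ∈ (0,1) and C such that for all large n, the annulus S(n,x₀) between radii e^{-u_n} − e^{-u_n²} and e^{-u_n} satisfies μ(S(n,x₀)) ≤ C n^{-2δ′v − δ′ log n}. -/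
open Filter MeasureTheory

/-- Under Assumption A at `x₀` with exponent `δ̃ ∈ (0,1]` and the lower bound
`u_n ≥ (v + log n)/(d + ε₀)` for large `n`, there are `δ' ∈ (0,1)` and `C > 0` such that
for large `n` the annulus between radii `e^{-u_n} - e^{-u_n²}` and `e^{-u_n}` has measure
at most `C n^{-2δ'v - δ' log n}`. -/
theorem stmt6 {X : Type*} [MetricSpace X] [MeasurableSpace X]
    (μ : Measure X) [IsProbabilityMeasure μ] (x₀ : X)
    (δt : ℝ) (hδ : 0 < δt ∧ δt ≤ 1)
    (hAssA : ∀ r ε : ℝ, 0 < ε → ε ≤ r → r < 1 →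
      (μ {y | r ≤ dist x₀ y ∧ dist x₀ y ≤ r + ε}).toReal ≤ ε ^ δt)
    (u : ℕ → ℝ) (hu : Tendsto u atTop atTop)
    (v d ε₀ : ℝ) (hdε : 0 < d + ε₀)
    (hlow : ∃ N₀ : ℕ, ∀ n ≥ N₀, (v + Real.log n) / (d + ε₀) ≤ u n) :
    ∃ δ' : ℝ, 0 < δ' ∧ δ' < 1 ∧ ∃ C > (0 : ℝ), ∃ N : ℕ, ∀ n ≥ N,
      (μ {y | Real.exp (-u n) - Real.exp (-(u n ^ 2)) ≤ dist x₀ y ∧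
          dist x₀ y ≤ Real.exp (-u n)}).toReal ≤
        C * (n : ℝ) ^ (-2 * δ' * v - δ' * Real.log n) := by
  obtain ⟨hδ0, hδ1⟩ := hδ
  obtain ⟨N₀, hN₀⟩ := hlow
  set δ' : ℝ := min (δt / (d + ε₀) ^ 2) (1 / 2) with hδ'def
  have hδ'pos : 0 < δ' := lt_min (div_pos hδ0 (by positivity)) (by norm_num)
  have hδ'lt : δ' < 1 := lt_of_le_of_lt (min_le_right _ _) (by norm_num)
  have hδ'le : δ' * (d + ε₀) ^ 2 ≤ δt := by
    have h := min_le_left (δt / (d + ε₀) ^ 2) (1 / 2)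
    calc δ' * (d + ε₀) ^ 2 ≤ δt / (d + ε₀) ^ 2 * (d + ε₀) ^ 2 :=
          mul_le_mul_of_nonneg_right h (by positivity)
      _ = δt := by field_simp
  have h2 : ∀ᶠ n in atTop, 2 ≤ u n := hu.eventually_ge_atTop 2
  rw [eventually_atTop] at h2
  obtain ⟨N₁, hN₁⟩ := h2
  set N₂ : ℕ := ⌈Real.exp (-v)⌉₊ + 1 with hN₂def
  refine ⟨δ', hδ'pos, hδ'lt, 1, one_pos, max (max N₀ N₁) N₂, ?_⟩
  intro n hn
  have hn₀ : N₀ ≤ n := le_trans (le_trans (le_max_left _ _) (le_max_left _ _)) hn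
  have hn₁ : N₁ ≤ n := le_trans (le_trans (le_max_right _ _) (le_max_left _ _)) hn
  have hn₂ : N₂ ≤ n := le_trans (le_max_right _ _) hn
  have hnpos : 0 < n := lt_of_lt_of_le (Nat.succ_pos _) hn₂
  have hncast : (0 : ℝ) < n := by exact_mod_cast hnpos
  have hu2 : 2 ≤ u n := hN₁ n hn₁
  have hun : (v + Real.log n) / (d + ε₀) ≤ u n := hN₀ n hn₀
  have hexpn : Real.exp (-v) ≤ (n : ℝ) := by
    calc Real.exp (-v) ≤ (⌈Real.exp (-v)⌉₊ : ℝ) := Nat.le_ceil _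
      _ ≤ (n : ℝ) := by exact_mod_cast le_trans (Nat.le_succ _) hn₂
  have hL : -v ≤ Real.log n := (Real.le_log_iff_exp_le hncast).mpr hexpn
  have hvL : 0 ≤ v + Real.log n := by linarith
  -- set up radii
  have hεpos : (0 : ℝ) < Real.exp (-(u n ^ 2)) := Real.exp_pos _
  have hsq : u n + Real.log 2 ≤ u n ^ 2 := by
    nlinarith [Real.log_two_lt_d9]
  have h2ε : 2 * Real.exp (-(u n ^ 2)) ≤ Real.exp (-u n) := by
    have h := Real.exp_le_exp.mpr (show -(u n ^ 2) ≤ -u n - Real.log 2 by linarith)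
    rw [Real.exp_sub, Real.exp_log two_pos] at h
    linarith
  have hεr : Real.exp (-(u n ^ 2)) ≤ Real.exp (-u n) - Real.exp (-(u n ^ 2)) := by
    linarith
  have hrlt1 : Real.exp (-u n) - Real.exp (-(u n ^ 2)) < 1 := by
    have h1 : Real.exp (-u n) < 1 := Real.exp_lt_one_iff.mpr (by linarith)
    linarith
  have key := hAssA (Real.exp (-u n) - Real.exp (-(u n ^ 2))) (Real.exp (-(u n ^ 2)))
    hεpos hεr hrlt1
  rw [sub_add_cancel] at key
  refine le_trans key ?_
  rw [one_mul]
  -- rewrite both sides as exponentials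
  have hlhs : Real.exp (-(u n ^ 2)) ^ δt = Real.exp (-(u n ^ 2) * δt) := by
    rw [Real.rpow_def_of_pos hεpos, Real.log_exp]
  have hrhs : (n : ℝ) ^ (-2 * δ' * v - δ' * Real.log n) =
      Real.exp (Real.log n * (-2 * δ' * v - δ' * Real.log n)) := by
    rw [Real.rpow_def_of_pos hncast]
  rw [hlhs, hrhs]
  apply Real.exp_le_exp.mpr
  -- main exponent inequality
  set L := Real.log n
  have hQ : 0 ≤ (v + L) / (d + ε₀) := div_nonneg hvL hdε.le
  have hQ2 : ((v + L) / (d + ε₀)) ^ 2 ≤ u n ^ 2 := by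
    apply pow_le_pow_left₀ hQ hun
  have hprod : δ' * (d + ε₀) ^ 2 * ((v + L) / (d + ε₀)) ^ 2 ≤ δt * u n ^ 2 :=
    mul_le_mul hδ'le hQ2 (by positivity) hδ0.le
  have heq : δ' * (d + ε₀) ^ 2 * ((v + L) / (d + ε₀)) ^ 2 = δ' * (v + L) ^ 2 := by
    field_simp
  rw [heq] at hprod
  nlinarith [mul_nonneg hδ'pos.le (sq_nonneg v)]
end

section
/- In the unit square with a measure μ disintegrating over a measurable partition into horizontal line segments (local unstable manifolds) crossing a small square neighborhood of x₀ ∈ ℝ², with conditional measures equivalent to 1-dimensional Lebesgue measure with uniformly bounded densities: for w > 1 and r < 1, setting ε = r^w, the annulus S = B_{r+ε}(x₀) \ B_r(x₀) (Euclidean balls) satisfies μ(S) ≤ C r^{(w+1)/2} ≤ C ε^{1/2}. In particular Assumption A holds with exponent 1/2. -/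
/-!
A horizontal slice of the annulus `r² < |p - x₀|² ≤ R²` at height `y` is the set of `x` with
`r² - t < (x - a)² ≤ R² - t`, `t = (y - b)²`: at most two intervals, each of length
`√(R² - t) - √(r² - t) ≤ √(R² - r²)`. Integrating against `ν` and using the density bound `K` gives
`μ ≤ 2K √(R² - r²)`, and for `R = r + r^w` with `r < 1 < w` one has `R² - r² ≤ 4 r^(w+1)`.
-/

open MeasureTheory

theorem Real.sqrt_le_sqrt_add_sqrt_sub {u v : ℝ} (h : u ≤ v) : √v ≤ √u + √(v - u) := by
  rcases le_or_gt 0 u with hu | hu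
  · rw [Real.sqrt_le_left (by positivity)]
    nlinarith [Real.sq_sqrt hu, Real.sq_sqrt (sub_nonneg.2 h), Real.sqrt_nonneg u,
      Real.sqrt_nonneg (v - u)]
  · rw [Real.sqrt_eq_zero_of_nonpos hu.le, zero_add]
    exact Real.sqrt_le_sqrt (by linarith)

theorem volume_setOf_sq_sub_mem_Ioc_le (a u v : ℝ) (h : u ≤ v) :
    volume {x : ℝ | u < (x - a) ^ 2 ∧ (x - a) ^ 2 ≤ v} ≤ ENNReal.ofReal (2 * √(v - u)) := by
  have hsub : {x : ℝ | u < (x - a) ^ 2 ∧ (x - a) ^ 2 ≤ v} ⊆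
      Set.Icc (a - √v) (a - √u) ∪ Set.Icc (a + √u) (a + √v) := by
    rintro x ⟨hux, hxv⟩
    have hupper : |x - a| ≤ √v := Real.abs_le_sqrt hxv
    have hlower : √u ≤ |x - a| := Real.sqrt_sq_eq_abs (x - a) ▸ Real.sqrt_le_sqrt hux.le
    rcases le_or_gt 0 (x - a) with hx | hx
    · rw [abs_of_nonneg hx] at hupper hlower
      exact Or.inr ⟨by linarith, by linarith⟩
    · rw [abs_of_neg hx] at hupper hlower
      exact Or.inl ⟨by linarith, by linarith⟩
  have hwidth : √v - √u ≤ √(v - u) := by linarith [Real.sqrt_le_sqrt_add_sqrt_sub h]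
  calc volume {x : ℝ | u < (x - a) ^ 2 ∧ (x - a) ^ 2 ≤ v}
      ≤ volume (Set.Icc (a - √v) (a - √u)) + volume (Set.Icc (a + √u) (a + √v)) :=
        (measure_mono hsub).trans (measure_union_le _ _)
    _ ≤ ENNReal.ofReal (√(v - u)) + ENNReal.ofReal (√(v - u)) := by
        rw [Real.volume_Icc, Real.volume_Icc]
        gcongr <;> linarith
    _ = ENNReal.ofReal (2 * √(v - u)) := by
        rw [← ENNReal.ofReal_add (Real.sqrt_nonneg _) (Real.sqrt_nonneg _), two_mul]

def annulus (x₀ : ℝ × ℝ) (r R : ℝ) : Set (ℝ × ℝ) :=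
  {p | r ^ 2 < (p.1 - x₀.1) ^ 2 + (p.2 - x₀.2) ^ 2 ∧ (p.1 - x₀.1) ^ 2 + (p.2 - x₀.2) ^ 2 ≤ R ^ 2}

theorem measurableSet_annulus (x₀ : ℝ × ℝ) (r R : ℝ) : MeasurableSet (annulus x₀ r R) := by
  have hd : Measurable fun p : ℝ × ℝ => (p.1 - x₀.1) ^ 2 + (p.2 - x₀.2) ^ 2 := by fun_prop
  exact (measurableSet_lt measurable_const hd).inter (measurableSet_le hd measurable_const)

theorem volume_annulus_slice_le (x₀ : ℝ × ℝ) {r R : ℝ} (h : r ^ 2 ≤ R ^ 2) (y : ℝ) :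
    volume {x : ℝ | (x, y) ∈ annulus x₀ r R} ≤ ENNReal.ofReal (2 * √(R ^ 2 - r ^ 2)) := by
  have hslice : {x : ℝ | (x, y) ∈ annulus x₀ r R} = {x : ℝ | r ^ 2 - (y - x₀.2) ^ 2 < (x - x₀.1) ^ 2 ∧
      (x - x₀.1) ^ 2 ≤ R ^ 2 - (y - x₀.2) ^ 2} := by
    ext x
    simp only [annulus, Set.mem_ofPred_eq, sub_lt_iff_lt_add, le_sub_iff_add_le]
  rw [hslice, ← sub_sub_sub_cancel_right (R ^ 2) (r ^ 2) ((y - x₀.2) ^ 2)]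
  exact volume_setOf_sq_sub_mem_Ioc_le x₀.1 _ _ (sub_le_sub_right h _)

theorem integral_volume_annulus_slice_le (ν : Measure ℝ) [IsProbabilityMeasure ν]
    (x₀ : ℝ × ℝ) {r R : ℝ} (h : r ^ 2 ≤ R ^ 2) :
    ∫ y, (volume {x : ℝ | (x, y) ∈ annulus x₀ r R}).toReal ∂ν ≤ 2 * √(R ^ 2 - r ^ 2) := by
  calc ∫ y, (volume {x : ℝ | (x, y) ∈ annulus x₀ r R}).toReal ∂ν
      ≤ ∫ _, 2 * √(R ^ 2 - r ^ 2) ∂ν :=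
        integral_mono_of_nonneg (.of_forall fun _ => ENNReal.toReal_nonneg) (integrable_const _)
          (.of_forall fun y => ENNReal.toReal_le_of_le_ofReal (by positivity)
            (volume_annulus_slice_le x₀ h y))
    _ = 2 * √(R ^ 2 - r ^ 2) := by simp

theorem sqrt_sq_add_rpow_sub_sq_le {r w : ℝ} (hw : 1 < w) (hr0 : 0 < r) (hr1 : r < 1) :
    √((r + r ^ w) ^ 2 - r ^ 2) ≤ 2 * r ^ ((w + 1) / 2) := by
  have hsq : (r + r ^ w) ^ 2 - r ^ 2 = 2 * r ^ (w + 1) + r ^ (2 * w) := by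
    rw [Real.rpow_add hr0, Real.rpow_one, mul_comm 2 w, Real.rpow_mul hr0.le]
    norm_cast; ring
  have hsmall : r ^ (2 * w) ≤ r ^ (w + 1) :=
    Real.rpow_le_rpow_of_exponent_ge hr0 hr1.le (by linarith)
  have hroot : 4 * r ^ (w + 1) = (2 * r ^ ((w + 1) / 2)) ^ 2 := by
    rw [mul_pow, ← Real.rpow_natCast (r ^ ((w + 1) / 2)) 2, ← Real.rpow_mul hr0.le]
    norm_num
  have hpos := Real.rpow_pos_of_pos hr0 (w + 1)
  rw [← Real.sqrt_sq (by positivity : 0 ≤ 2 * r ^ ((w + 1) / 2)), ← hroot, hsq]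
  exact Real.sqrt_le_sqrt (by linarith)

theorem stmt7_general (μ : Measure (ℝ × ℝ))
    (ν : Measure ℝ) [IsProbabilityMeasure ν] (x₀ : ℝ × ℝ) (K : ℝ) (hK : 0 < K)
    (hdis : ∀ A : Set (ℝ × ℝ), MeasurableSet A →
      (μ A).toReal ≤ K * ∫ y, (volume {x : ℝ | (x, y) ∈ A}).toReal ∂ν) :
    ∃ C > (0 : ℝ), ∀ w r : ℝ, 1 < w → 0 < r → r < 1 →
      (μ {p : ℝ × ℝ | r ^ 2 < (p.1 - x₀.1) ^ 2 + (p.2 - x₀.2) ^ 2 ∧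
          (p.1 - x₀.1) ^ 2 + (p.2 - x₀.2) ^ 2 ≤ (r + r ^ w) ^ 2}).toReal ≤
        C * r ^ ((w + 1) / 2) ∧
      C * r ^ ((w + 1) / 2) ≤ C * (r ^ w) ^ ((1 : ℝ) / 2) := by
  refine ⟨4 * K, by positivity, fun w r hw hr0 hr1 => ⟨?_, ?_⟩⟩
  · have hrR : r ^ 2 ≤ (r + r ^ w) ^ 2 := by
      have := Real.rpow_pos_of_pos hr0 w
      gcongr; linarith
    calc (μ (annulus x₀ r (r + r ^ w))).toReal
        ≤ K * ∫ y, (volume {x : ℝ | (x, y) ∈ annulus x₀ r (r + r ^ w)}).toReal ∂ν :=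
          hdis _ (measurableSet_annulus x₀ r _)
      _ ≤ K * (2 * (2 * r ^ ((w + 1) / 2))) := by
          gcongr
          exact (integral_volume_annulus_slice_le ν x₀ hrR).trans
            (by gcongr; exact sqrt_sq_add_rpow_sub_sq_le hw hr0 hr1)
      _ = 4 * K * r ^ ((w + 1) / 2) := by ring
  · rw [← Real.rpow_mul hr0.le]
    exact mul_le_mul_of_nonneg_left
      (Real.rpow_le_rpow_of_exponent_ge hr0 hr1.le (by linarith)) (by positivity)

/-- Local product structure shell bound: if `μ` disintegrates over horizontal leaves with
conditional measures dominated by Lebesgue measure (density bounded by `K`), then for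
`w > 1`, `0 < r < 1` and `ε = r^w`, the Euclidean annulus `B_{r+ε}(x₀) \ B_r(x₀)` has
`μ`-measure at most `C r^{(w+1)/2} ≤ C ε^{1/2}`. In particular Assumption A holds with
exponent `1/2`. -/
theorem stmt7 (μ : Measure (ℝ × ℝ)) [IsProbabilityMeasure μ]
    (ν : Measure ℝ) [IsProbabilityMeasure ν] (x₀ : ℝ × ℝ) (K : ℝ) (hK : 0 < K)
    (hdis : ∀ A : Set (ℝ × ℝ), MeasurableSet A →
      (μ A).toReal ≤ K * ∫ y, (volume {x : ℝ | (x, y) ∈ A}).toReal ∂ν) :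
    ∃ C > (0 : ℝ), ∀ w r : ℝ, 1 < w → 0 < r → r < 1 →
      (μ {p : ℝ × ℝ | r ^ 2 < (p.1 - x₀.1) ^ 2 + (p.2 - x₀.2) ^ 2 ∧
          (p.1 - x₀.1) ^ 2 + (p.2 - x₀.2) ^ 2 ≤ (r + r ^ w) ^ 2}).toReal ≤
        C * r ^ ((w + 1) / 2) ∧
      C * r ^ ((w + 1) / 2) ≤ C * (r ^ w) ^ ((1 : ℝ) / 2) :=
  stmt7_general μ ν x₀ K hK hdis
end

section
/- Key geometric estimate for the product-structure shell bound: for 0 < r < 1, w > 1, ε = r^w, any horizontal line {y = c} with |c| ≤ r intersects the planar annulus {x² + y² ≤ (r+ε)²} \ {x² + y² < r²} in a set of 1-dimensional Lebesgue measure at most C·r^{(w+1)/2} for an absolute constant C. -/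
open MeasureTheory

/-- Key geometric estimate: for `0 < r < 1`, `w > 1`, `ε = r^w`, any horizontal line
`{y = c}` with `|c| ≤ r` meets the planar annulus between radii `r` and `r + ε` in a set
of length at most `C r^{(w+1)/2}` for an absolute constant `C`. -/
theorem stmt8 : ∃ C : ℝ, 0 < C ∧ ∀ r w c : ℝ, 0 < r → r < 1 → 1 < w → |c| ≤ r →
    (volume {x : ℝ | r ^ 2 ≤ x ^ 2 + c ^ 2 ∧ x ^ 2 + c ^ 2 ≤ (r + r ^ w) ^ 2}).toReal ≤
      C * r ^ ((w + 1) / 2) := by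
  refine ⟨6, by norm_num, fun r w c hr hr1 hw hc => ?_⟩
  set ε := r ^ w with hε_def
  have hε : 0 < ε := Real.rpow_pos_of_pos hr w
  have hεr : ε ≤ r := by
    calc ε ≤ r ^ (1:ℝ) := Real.rpow_le_rpow_of_exponent_ge hr hr1.le (by linarith)
    _ = r := Real.rpow_one r
  have hc2 : c ^ 2 ≤ r ^ 2 := by
    have h := abs_le.mp hc
    nlinarith [h.1, h.2]
  set s := r ^ ((w + 1) / 2) with hs_def
  have hs : 0 < s := Real.rpow_pos_of_pos hr _
  have hss : s * s = r * ε := by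
    rw [hs_def, hε_def, ← Real.rpow_add hr]
    rw [show (w+1)/2 + (w+1)/2 = 1 + w by ring, Real.rpow_add hr, Real.rpow_one]
  set A := Real.sqrt (r ^ 2 - c ^ 2) with hA_def
  set B := Real.sqrt ((r + ε) ^ 2 - c ^ 2) with hB_def
  have hA0 : 0 ≤ A := Real.sqrt_nonneg _
  have hB0 : 0 ≤ B := Real.sqrt_nonneg _
  have hA2 : A ^ 2 = r ^ 2 - c ^ 2 := Real.sq_sqrt (by linarith)
  have hB2 : B ^ 2 = (r + ε) ^ 2 - c ^ 2 := Real.sq_sqrt (by nlinarith)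
  have hAB : A ≤ B := Real.sqrt_le_sqrt (by nlinarith)
  have hBs : s ≤ B := by
    have : s = Real.sqrt (s * s) := by
      rw [Real.sqrt_mul_self hs.le]
    rw [this, hB_def]
    exact Real.sqrt_le_sqrt (by nlinarith)
  -- subset of two intervals
  have hsub : {x : ℝ | r ^ 2 ≤ x ^ 2 + c ^ 2 ∧ x ^ 2 + c ^ 2 ≤ (r + r ^ w) ^ 2}
      ⊆ Set.Icc (-B) (-A) ∪ Set.Icc A B := by
    intro x ⟨h1, h2⟩
    have hxB : |x| ≤ B := by
      rw [← Real.sqrt_sq_eq_abs, hB_def]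
      exact Real.sqrt_le_sqrt (by linarith)
    have hxA : A ≤ |x| := by
      rw [← Real.sqrt_sq_eq_abs, hA_def]
      exact Real.sqrt_le_sqrt (by linarith)
    rcases abs_cases x with ⟨h, _⟩ | ⟨h, _⟩
    · right; constructor <;> linarith [hxA, hxB]
    · left; constructor <;> [linarith [hxB]; linarith [hxA]]
  have h1 : volume {x : ℝ | r ^ 2 ≤ x ^ 2 + c ^ 2 ∧ x ^ 2 + c ^ 2 ≤ (r + r ^ w) ^ 2}
      ≤ ENNReal.ofReal (B - A) + ENNReal.ofReal (B - A) := by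
    refine (measure_mono hsub).trans ((measure_union_le _ _).trans ?_)
    rw [Real.volume_Icc, Real.volume_Icc]
    rw [show -A - -B = B - A by ring]
  have hfin : ENNReal.ofReal (B - A) + ENNReal.ofReal (B - A) ≠ ⊤ := by finiteness
  have h2 := ENNReal.toReal_mono hfin h1
  rw [ENNReal.toReal_add (by finiteness) (by finiteness),
    ENNReal.toReal_ofReal (by linarith)] at h2
  refine h2.trans ?_
  -- now show 2 * (B - A) ≤ 6 * s
  have key : (B - A) * (B + A) ≤ 3 * (s * s) := by nlinarith
  nlinarith [mul_le_mul_of_nonneg_left hBs (sub_nonneg.mpr hAB)]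
end

section
/- Let α ∈ (0,1), γ₁ > 0, and a ≥ −7γ₁/log α. Then there is a constant C such that for all i ≥ 2, ∑_{j > i + a log i} α^{j-i} · i^{3γ₁} · j^{3γ₁} ≤ C / i^{γ₁}. -/
set_option maxHeartbeats 1000000

open Classical

/-- Summation estimate: for `α ∈ (0,1)`, `γ₁ > 0` and `a ≥ -7γ₁/log α`, there is `C` with
`∑_{j > i + a log i} α^{j-i} i^{3γ₁} j^{3γ₁} ≤ C / i^{γ₁}` for all `i ≥ 2`. -/
theorem stmt11 (α γ₁ a : ℝ) (hα : 0 < α ∧ α < 1) (hγ : 0 < γ₁)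
    (ha : -7 * γ₁ / Real.log α ≤ a) :
    ∃ C > (0 : ℝ), ∀ i : ℕ, 2 ≤ i →
      (∑' j : ℕ, if (i : ℝ) + a * Real.log i < (j : ℝ) then
          α ^ ((j : ℝ) - (i : ℝ)) * (i : ℝ) ^ (3 * γ₁) * (j : ℝ) ^ (3 * γ₁) else 0) ≤
        C / (i : ℝ) ^ γ₁ := by
  obtain ⟨hα1, hα2⟩ := hα
  have hlogα : Real.log α < 0 := Real.log_neg hα1 hα2
  have ha' : a * Real.log α ≤ -(7 * γ₁) := by
    rw [div_le_iff_of_neg hlogα] at ha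
    linarith
  have hapos : 0 < a :=
    lt_of_lt_of_le (div_pos_of_neg_of_neg (by linarith) hlogα) ha
  set K : ℕ := Nat.ceil (3 * γ₁) with hK
  have h3K : 3 * γ₁ ≤ (K : ℝ) := Nat.le_ceil _
  -- summability of the comparison series
  have hbase : Summable (fun n : ℕ => (n : ℝ) ^ K * α ^ n) :=
    summable_pow_mul_geometric_of_norm_lt_one K
      (by rw [Real.norm_eq_abs, abs_of_pos hα1]; exact hα2)
  have hshift1 : Summable (fun m : ℕ => ((m + 1 : ℕ) : ℝ) ^ K * α ^ (m + 1)) :=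
    (summable_nat_add_iff 1).2 hbase
  have hgsum : Summable (fun m : ℕ => ((1 : ℝ) + m) ^ K * α ^ m) := by
    refine (hshift1.mul_left α⁻¹).congr fun m => ?_
    push_cast
    rw [pow_succ]
    field_simp
    ring
  set S : ℝ := ∑' m : ℕ, ((1 : ℝ) + m) ^ K * α ^ m with hS
  have hS0 : 0 ≤ S :=
    tsum_nonneg fun m => mul_nonneg (pow_nonneg (by positivity) _) (pow_nonneg hα1.le _)
  have hD0 : (0 : ℝ) ≤ (2 + a) ^ (3 * γ₁) := Real.rpow_nonneg (by linarith) _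
  refine ⟨(2 + a) ^ (3 * γ₁) * S + 1, by nlinarith [mul_nonneg hD0 hS0], ?_⟩
  intro i hi
  have hI2 : (2 : ℝ) ≤ (i : ℝ) := by exact_mod_cast hi
  have hIpos : (0 : ℝ) < (i : ℝ) := by linarith
  have hI1 : (1 : ℝ) ≤ (i : ℝ) := by linarith
  have hlogI : 0 ≤ Real.log i := Real.log_nonneg hI1
  set T : ℝ := (i : ℝ) + a * Real.log i with hT
  have hT0 : 0 ≤ T := by
    have := mul_nonneg hapos.le hlogI
    rw [hT]; linarith
  set n₀ : ℕ := Nat.floor T + 1 with hn₀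
  have hTn₀ : T < (n₀ : ℝ) := by
    have := Nat.lt_floor_add_one T
    rw [hn₀]; push_cast; linarith
  have hn₀T : (n₀ : ℝ) ≤ T + 1 := by
    have := Nat.floor_le hT0
    rw [hn₀]; push_cast; linarith
  set f : ℕ → ℝ := fun j => if T < (j : ℝ) then
      α ^ ((j : ℝ) - (i : ℝ)) * (i : ℝ) ^ (3 * γ₁) * (j : ℝ) ^ (3 * γ₁) else 0 with hfdef
  have hf0 : ∀ j, 0 ≤ f j := by
    intro j
    rw [hfdef]
    dsimp only
    split
    · exact mul_nonneg (mul_nonneg (Real.rpow_nonneg hα1.le _) (Real.rpow_nonneg hIpos.le _))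
        (Real.rpow_nonneg (Nat.cast_nonneg _) _)
    · exact le_rfl
  have hIγ : (0:ℝ) < (i:ℝ) ^ γ₁ := Real.rpow_pos_of_pos hIpos _
  by_cases hsum : Summable f
  · -- the key pointwise bound for the shifted sequence
    have key : ∀ m : ℕ, f (m + n₀) ≤
        ((2 + a) ^ (3 * γ₁) * (((i : ℝ) ^ γ₁)⁻¹)) * (((1 : ℝ) + m) ^ K * α ^ m) := by
      intro m
      have hjn : T < ((m + n₀ : ℕ) : ℝ) := by
        have h := hTn₀
        have hm0 : (0:ℝ) ≤ (m:ℝ) := Nat.cast_nonneg m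
        push_cast at h ⊢
        linarith
      have hfval : f (m + n₀) =
          α ^ (((m + n₀ : ℕ) : ℝ) - (i : ℝ)) * (i : ℝ) ^ (3 * γ₁) *
            ((m + n₀ : ℕ) : ℝ) ^ (3 * γ₁) := by
        rw [hfdef]; exact if_pos hjn
      have hA : α ^ (((m + n₀ : ℕ) : ℝ) - (i : ℝ)) =
          α ^ ((n₀ : ℝ) - (i : ℝ)) * α ^ m := by
        rw [← Real.rpow_natCast α m, ← Real.rpow_add hα1]
        congr 1
        push_cast
        ring
      have hB : α ^ ((n₀ : ℝ) - (i : ℝ)) ≤ (((i : ℝ) ^ (7 * γ₁))⁻¹) := by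
        have h1 : a * Real.log i ≤ (n₀ : ℝ) - (i : ℝ) := by
          have := hTn₀; rw [hT] at this; linarith
        have h2 : α ^ ((n₀ : ℝ) - (i : ℝ)) ≤ α ^ (a * Real.log i) :=
          Real.rpow_le_rpow_of_exponent_ge hα1 hα2.le h1
        have h3 : α ^ (a * Real.log i) ≤ (i : ℝ) ^ (-(7 * γ₁)) := by
          rw [Real.rpow_def_of_pos hα1, Real.rpow_def_of_pos hIpos]
          apply Real.exp_le_exp.2
          calc Real.log α * (a * Real.log i) = (a * Real.log α) * Real.log i := by ring
            _ ≤ (-(7 * γ₁)) * Real.log i := mul_le_mul_of_nonneg_right ha' hlogI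
            _ = Real.log i * (-(7 * γ₁)) := by ring
        rw [← Real.rpow_neg hIpos.le]
        exact h2.trans h3
      have hj2 : ((m + n₀ : ℕ) : ℝ) ≤ (2 + a) * (i : ℝ) * (1 + m) := by
        have hlogle : Real.log i ≤ (i : ℝ) := by
          linarith [Real.log_le_sub_one_of_pos hIpos]
        have h4 : a * Real.log i ≤ a * (i : ℝ) := mul_le_mul_of_nonneg_left hlogle hapos.le
        have h6 : (1 : ℝ) ≤ (2 + a) * (i : ℝ) := by nlinarith
        have hm0 : (0:ℝ) ≤ (m:ℝ) := Nat.cast_nonneg m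
        have hprod : 0 ≤ ((2 + a) * (i : ℝ) - 1) * (m : ℝ) :=
          mul_nonneg (by linarith) hm0
        have h5 := hn₀T
        rw [hT] at h5
        push_cast at h5 hprod h6 ⊢
        nlinarith
      have hγ3 : (0:ℝ) ≤ 3 * γ₁ := by linarith
      have hj3 : ((m + n₀ : ℕ) : ℝ) ^ (3 * γ₁) ≤
          (2 + a) ^ (3 * γ₁) * (i : ℝ) ^ (3 * γ₁) * ((1 : ℝ) + m) ^ K := by
        have h7 : ((m + n₀ : ℕ) : ℝ) ^ (3 * γ₁) ≤ ((2 + a) * (i : ℝ) * (1 + m)) ^ (3 * γ₁) :=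
          Real.rpow_le_rpow (Nat.cast_nonneg _) hj2 hγ3
        have h8 : ((2 + a) * (i : ℝ) * (1 + m)) ^ (3 * γ₁) =
            (2 + a) ^ (3 * γ₁) * (i : ℝ) ^ (3 * γ₁) * ((1 + (m : ℝ))) ^ (3 * γ₁) := by
          rw [Real.mul_rpow (by positivity) (by positivity),
            Real.mul_rpow (by linarith) hIpos.le]
        have h9 : ((1 : ℝ) + m) ^ (3 * γ₁) ≤ ((1 : ℝ) + m) ^ K := by
          rw [← Real.rpow_natCast ((1 : ℝ) + m) K]
          exact Real.rpow_le_rpow_of_exponent_le (le_add_of_nonneg_right (Nat.cast_nonneg m)) h3K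
        calc ((m + n₀ : ℕ) : ℝ) ^ (3 * γ₁) ≤
            (2 + a) ^ (3 * γ₁) * (i : ℝ) ^ (3 * γ₁) * ((1 + (m : ℝ))) ^ (3 * γ₁) := by
              rw [← h8]; exact h7
          _ ≤ (2 + a) ^ (3 * γ₁) * (i : ℝ) ^ (3 * γ₁) * ((1 : ℝ) + m) ^ K := by
              exact mul_le_mul_of_nonneg_left h9
                (mul_nonneg hD0 (Real.rpow_nonneg hIpos.le _))
      have emain : ((i : ℝ) ^ (7 * γ₁))⁻¹ * (i : ℝ) ^ (3 * γ₁) * (i : ℝ) ^ (3 * γ₁) =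
          ((i : ℝ) ^ γ₁)⁻¹ := by
        rw [← Real.rpow_neg hIpos.le, ← Real.rpow_add hIpos, ← Real.rpow_add hIpos,
          ← Real.rpow_neg hIpos.le]
        congr 1
        ring
      calc f (m + n₀) = (α ^ ((n₀ : ℝ) - (i : ℝ)) * α ^ m) * (i : ℝ) ^ (3 * γ₁) *
            ((m + n₀ : ℕ) : ℝ) ^ (3 * γ₁) := by rw [hfval, hA]
        _ ≤ ((((i : ℝ) ^ (7 * γ₁))⁻¹) * α ^ m) * (i : ℝ) ^ (3 * γ₁) *
            ((2 + a) ^ (3 * γ₁) * (i : ℝ) ^ (3 * γ₁) * ((1 : ℝ) + m) ^ K) := by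
          have hx1 : (α ^ ((n₀ : ℝ) - (i : ℝ)) * α ^ m) * (i : ℝ) ^ (3 * γ₁) ≤
              ((((i : ℝ) ^ (7 * γ₁))⁻¹) * α ^ m) * (i : ℝ) ^ (3 * γ₁) := by
            apply mul_le_mul_of_nonneg_right _ (Real.rpow_nonneg hIpos.le _)
            exact mul_le_mul_of_nonneg_right hB (pow_nonneg hα1.le _)
          exact mul_le_mul hx1 hj3 (Real.rpow_nonneg (Nat.cast_nonneg _) _)
            (by positivity)
        _ = ((2 + a) ^ (3 * γ₁) * (((i : ℝ) ^ γ₁)⁻¹)) * (((1 : ℝ) + m) ^ K * α ^ m) := by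
          rw [← emain]; ring
    have hshift : Summable fun m => f (m + n₀) := (summable_nat_add_iff n₀).2 hsum
    have h1 : (∑' m : ℕ, f (m + n₀)) ≤
        ((2 + a) ^ (3 * γ₁) * (((i : ℝ) ^ γ₁)⁻¹)) * S := by
      calc (∑' m : ℕ, f (m + n₀)) ≤
          ∑' m : ℕ, ((2 + a) ^ (3 * γ₁) * (((i : ℝ) ^ γ₁)⁻¹)) * (((1 : ℝ) + m) ^ K * α ^ m) :=
            Summable.tsum_le_tsum key hshift (hgsum.mul_left _)
        _ = ((2 + a) ^ (3 * γ₁) * (((i : ℝ) ^ γ₁)⁻¹)) * S := by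
            rw [hS]; exact tsum_mul_left
    have hz : ∑ j ∈ Finset.range n₀, f j = 0 := by
      apply Finset.sum_eq_zero
      intro j hj
      have hjlt : j < n₀ := Finset.mem_range.1 hj
      have hjle : j ≤ Nat.floor T := by omega
      have hjT : (j : ℝ) ≤ T := le_trans (by exact_mod_cast hjle) (Nat.floor_le hT0)
      rw [hfdef]
      exact if_neg (not_lt.2 hjT)
    have h2 : (∑' j : ℕ, f j) = ∑' m : ℕ, f (m + n₀) := by
      rw [← Summable.sum_add_tsum_nat_add n₀ hsum, hz, zero_add]
    calc (∑' j : ℕ, f j) ≤ ((2 + a) ^ (3 * γ₁) * (((i : ℝ) ^ γ₁)⁻¹)) * S := by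
          rw [h2]; exact h1
      _ ≤ ((2 + a) ^ (3 * γ₁) * S + 1) / (i : ℝ) ^ γ₁ := by
          rw [div_eq_mul_inv]
          have : (2 + a) ^ (3 * γ₁) * S ≤ (2 + a) ^ (3 * γ₁) * S + 1 := by linarith
          calc ((2 + a) ^ (3 * γ₁) * (((i : ℝ) ^ γ₁)⁻¹)) * S
              = ((2 + a) ^ (3 * γ₁) * S) * (((i : ℝ) ^ γ₁)⁻¹) := by ring
            _ ≤ ((2 + a) ^ (3 * γ₁) * S + 1) * (((i : ℝ) ^ γ₁)⁻¹) :=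
                mul_le_mul_of_nonneg_right this (inv_nonneg.2 hIγ.le)
  · rw [tsum_eq_zero_of_not_summable hsum]
    positivity
end
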